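/- arXiv:0708.1575 — 2 statements merged into one kernel-verified Lean document; each statement's English description precedes it below -/
import Mathlib

section
/- The zeroth homology of the partial chain complex 0 ← A ←∂₁ A⊗A⊗A with ∂₁(a⊗b⊗c) = abc − cba equals A modulo the two-sided ideal generated by all commutators [a,b] = ab − ba; i.e., HS₀(A) = A/⟨[A,A]⟩, the universal commutative quotient (symmetrization) of A. -/
open TensorProduct

/-! `∂₁(a⊗b⊗1) = [a,b]`, so the image of `∂₁` contains every commutator; conversely
`∂₁(a⊗b⊗c) = [ab, c] + c[a,b]` lies in the ideal they generate. It remains to see that the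
image of `∂₁` is itself a two-sided ideal, which follows from the identities
`z · ∂₁(a⊗b⊗c) = ∂₁(za⊗b⊗c − zc⊗b⊗a + c⊗bz⊗a)` and
`∂₁(a⊗b⊗c) · z = ∂₁(a⊗b⊗cz − c⊗b⊗az + c⊗zb⊗a)`. -/

theorem LinearMap.apply_mem_of_forall_tmul_tmul_mem {R M N P Q S : Type*} [CommSemiring R]
    [AddCommMonoid M] [AddCommMonoid N] [AddCommMonoid P] [AddCommMonoid Q]
    [Module R M] [Module R N] [Module R P] [Module R Q] [SetLike S Q] [AddSubmonoidClass S Q]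
    (f : M ⊗[R] (N ⊗[R] P) →ₗ[R] Q) {s : S}
    (h : ∀ m n p, f (m ⊗ₜ (n ⊗ₜ p)) ∈ s) (t : M ⊗[R] (N ⊗[R] P)) : f t ∈ s := by
  induction t using TensorProduct.induction_on with
  | zero => simp
  | tmul m u =>
    induction u using TensorProduct.induction_on with
    | zero => simp
    | tmul n p => exact h m n p
    | add u v hu hv => simpa only [tmul_add, map_add] using add_mem hu hv
  | add u v hu hv => simpa only [map_add] using add_mem hu hv

section

variable {k A : Type*} [CommRing k] [Ring A] [Algebra k A] {d : A ⊗[k] (A ⊗[k] A) →ₗ[k] A}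

theorem commutator_mem_range (hd : ∀ a b c : A, d (a ⊗ₜ (b ⊗ₜ c)) = a * b * c - c * b * a)
    (a b : A) : a * b - b * a ∈ LinearMap.range d :=
  ⟨a ⊗ₜ (b ⊗ₜ 1), by rw [hd, mul_one, one_mul]⟩

theorem mul_mem_range_left (hd : ∀ a b c : A, d (a ⊗ₜ (b ⊗ₜ c)) = a * b * c - c * b * a)
    (z : A) {x : A} (hx : x ∈ LinearMap.range d) : z * x ∈ LinearMap.range d := by
  obtain ⟨t, rfl⟩ := hx
  refine (LinearMap.mulLeft k z ∘ₗ d).apply_mem_of_forall_tmul_tmul_mem (fun a b c => ?_) t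
  refine ⟨(z * a) ⊗ₜ (b ⊗ₜ c) - (z * c) ⊗ₜ (b ⊗ₜ a) + c ⊗ₜ ((b * z) ⊗ₜ a), ?_⟩
  simp only [map_add, map_sub, hd, LinearMap.comp_apply, LinearMap.mulLeft_apply]
  noncomm_ring

theorem mul_mem_range_right (hd : ∀ a b c : A, d (a ⊗ₜ (b ⊗ₜ c)) = a * b * c - c * b * a)
    (z : A) {x : A} (hx : x ∈ LinearMap.range d) : x * z ∈ LinearMap.range d := by
  obtain ⟨t, rfl⟩ := hx
  refine (LinearMap.mulRight k z ∘ₗ d).apply_mem_of_forall_tmul_tmul_mem (fun a b c => ?_) t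
  refine ⟨a ⊗ₜ (b ⊗ₜ (c * z)) - c ⊗ₜ (b ⊗ₜ (a * z)) + c ⊗ₜ ((z * b) ⊗ₜ a), ?_⟩
  simp only [map_add, map_sub, hd, LinearMap.comp_apply, LinearMap.mulRight_apply]
  noncomm_ring

def rangeTwoSidedIdeal (hd : ∀ a b c : A, d (a ⊗ₜ (b ⊗ₜ c)) = a * b * c - c * b * a) :
    TwoSidedIdeal A :=
  .mk' (LinearMap.range d) (zero_mem _) add_mem neg_mem
    (mul_mem_range_left hd _) (mul_mem_range_right hd _)

theorem span_commutators_le_rangeTwoSidedIdeal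
    (hd : ∀ a b c : A, d (a ⊗ₜ (b ⊗ₜ c)) = a * b * c - c * b * a) :
    TwoSidedIdeal.span {y : A | ∃ a b : A, y = a * b - b * a} ≤ rangeTwoSidedIdeal hd := by
  rw [TwoSidedIdeal.span_le]
  rintro _ ⟨a, b, rfl⟩
  exact (TwoSidedIdeal.mem_mk' ..).mpr (commutator_mem_range hd a b)

theorem apply_mem_span_commutators
    (hd : ∀ a b c : A, d (a ⊗ₜ (b ⊗ₜ c)) = a * b * c - c * b * a) (t : A ⊗[k] (A ⊗[k] A)) :
    d t ∈ TwoSidedIdeal.span {y : A | ∃ a b : A, y = a * b - b * a} := by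
  refine d.apply_mem_of_forall_tmul_tmul_mem (fun a b c => ?_) t
  have hcomm {x y : A} :
      x * y - y * x ∈ TwoSidedIdeal.span {y : A | ∃ a b : A, y = a * b - b * a} :=
    TwoSidedIdeal.subset_span ⟨x, y, rfl⟩
  rw [hd, show a * b * c - c * b * a = (a * b * c - c * (a * b)) + c * (a * b - b * a) by
    noncomm_ring]
  exact add_mem hcomm (TwoSidedIdeal.mul_mem_left _ c _ hcomm)

end

/-- The image of `∂₁ : A⊗A⊗A → A`, `a⊗b⊗c ↦ abc − cba`, is exactly the
two-sided ideal of `A` generated by all commutators `ab − ba`.  Hence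
`HS₀(A) = coker ∂₁ = A/⟨[A,A]⟩` is the universal commutative quotient (symmetrization)
of `A`. -/
theorem HS0_eq_symmetrization (k A : Type*) [CommRing k] [Ring A] [Algebra k A]
    (d1 : A ⊗[k] (A ⊗[k] A) →ₗ[k] A)
    (h1 : ∀ a b c : A, d1 (a ⊗ₜ (b ⊗ₜ c)) = a * b * c - c * b * a) :
    ∀ x : A, x ∈ LinearMap.range d1 ↔
      x ∈ TwoSidedIdeal.span {y : A | ∃ a b : A, y = a * b - b * a} := by
  intro x
  constructor
  · rintro ⟨t, rfl⟩
    exact apply_mem_span_commutators h1 t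
  · intro hx
    exact (TwoSidedIdeal.mem_mk' ..).mp (span_commutators_le_rangeTwoSidedIdeal h1 hx)
end

section
/- Every epimorphism f in ΔS from [m] to [n] factors uniquely as a permutation of [m] followed by a surjective order-preserving map, giving a bijection Epi_ΔS([m],[n]) ≅ Σ_{m+1} × Epi_Δ([m],[n]); hence as a right Σ_{m+1}-set (by precomposition with automorphisms of [m]) Epi_ΔS([m],[n]) is free with orbit set Epi_Δ([m],[n]). -/
/-- A morphism `[m] → [n]` in the category `ΔS`: a set function together with a
total (strict linear) order on each fiber, encoded as a relation `lt` that only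
relates elements of the same fiber and is a strict linear order on each fiber. -/
structure DS (m n : ℕ) where
  f : Fin (m+1) → Fin (n+1)
  lt : Fin (m+1) → Fin (m+1) → Prop
  lt_fiber : ∀ {j k}, lt j k → f j = f k
  lt_irrefl : ∀ j, ¬ lt j j
  lt_trans : ∀ {a b c}, lt a b → lt b c → lt a c
  lt_total : ∀ {j k}, f j = f k → j ≠ k → lt j k ∨ lt k j

/-- Composition in `ΔS`, ordering the fibers of `g ∘ f` by blocks. -/
def DS.comp {m n p : ℕ} (g : DS n p) (F : DS m n) : DS m p where
  f := g.f ∘ F.f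
  lt j k := (F.f j = F.f k ∧ F.lt j k) ∨ (F.f j ≠ F.f k ∧ g.lt (F.f j) (F.f k))
  lt_fiber := by
    rintro j k (⟨h, _⟩ | ⟨_, h⟩)
    · simp [Function.comp, h]
    · exact g.lt_fiber h
  lt_irrefl := by
    rintro j (⟨_, h⟩ | ⟨h, _⟩)
    · exact F.lt_irrefl _ h
    · exact h rfl
  lt_trans := by
    rintro a b c (⟨h1, h2⟩ | ⟨h1, h2⟩) (⟨h3, h4⟩ | ⟨h3, h4⟩)
    · exact Or.inl ⟨h1.trans h3, F.lt_trans h2 h4⟩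
    · exact Or.inr ⟨fun h => h3 (h1 ▸ h), h1 ▸ h4⟩
    · exact Or.inr ⟨fun h => h1 (h.trans h3.symm), h3 ▸ h2⟩
    · refine Or.inr ⟨fun h => ?_, g.lt_trans h2 h4⟩
      exact g.lt_irrefl _ (g.lt_trans (h ▸ h2) h4)
  lt_total := by
    intro j k hjk hne
    by_cases h : F.f j = F.f k
    · rcases F.lt_total h hne with h' | h'
      · exact Or.inl (Or.inl ⟨h, h'⟩)
      · exact Or.inr (Or.inl ⟨h.symm, h'⟩)
    · rcases g.lt_total hjk h with h' | h'
      · exact Or.inl (Or.inr ⟨h, h'⟩)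
      · exact Or.inr (Or.inr ⟨fun h'' => h h''.symm, h'⟩)

/-- The identity morphism of `[m]` in `ΔS`. -/
def DS.id (m : ℕ) : DS m m where
  f := _root_.id
  lt _ _ := False
  lt_fiber := by rintro j k ⟨⟩
  lt_irrefl := by rintro j ⟨⟩
  lt_trans := by rintro a b c ⟨⟩
  lt_total := by intro j k h hne; exact absurd h hne

/-- A permutation of `[m]` regarded as a morphism in `ΔS` (singleton fibers). -/
def DS.ofPerm {m : ℕ} (σ : Equiv.Perm (Fin (m+1))) : DS m m where
  f := σ
  lt _ _ := False
  lt_fiber := by rintro j k ⟨⟩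
  lt_irrefl := by rintro j ⟨⟩
  lt_trans := by rintro a b c ⟨⟩
  lt_total := by intro j k h hne; exact absurd (σ.injective h) hne

/-- A set function regarded as a morphism in `ΔS`, with each fiber carrying the
natural order inherited from `[m]`.  Morphisms of `Δ` are `DS.ofFun φ` for `φ`
monotone. -/
def DS.ofFun {m n : ℕ} (φ : Fin (m+1) → Fin (n+1)) : DS m n where
  f := φ
  lt j k := φ j = φ k ∧ j < k
  lt_fiber h := h.1
  lt_irrefl := by rintro j ⟨_, h⟩; exact _root_.lt_irrefl _ h
  lt_trans := by rintro a b c ⟨h1, h2⟩ ⟨h3, h4⟩; exact ⟨h1.trans h3, h2.trans h4⟩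
  lt_total := by
    intro j k h hne
    rcases lt_trichotomy j k with h' | h' | h'
    · exact Or.inl ⟨h, h'⟩
    · exact absurd h' hne
    · exact Or.inr ⟨h.symm, h'⟩

/-!
A `ΔS`-morphism `F : [m] → [n]` totally orders `[m]` lexicographically: first by the
value of `F`, then by the order of its fiber. The permutation `σ` that sorts `[m]` along this order
is unique, and `φ = F ∘ σ⁻¹` is then monotone; `F` is recovered from `φ` and `σ` because its
fiber orders are the restrictions of the lexicographic order. Precomposing `F` with a
permutation `τ` pulls the lexicographic order back along `τ`, so the sorting permutation
becomes `σ * τ` while `φ` is unchanged.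
-/

theorem exists_equiv_fin_lt_iff {α : Type*} [Fintype α] (r : α → α → Prop)
    [IsStrictTotalOrder α r] {k : ℕ} (hk : Fintype.card α = k) :
    ∃ e : α ≃ Fin k, ∀ a b, r a b ↔ e a < e b := by
  classical
  let := linearOrderOfSTO r
  refine ⟨(monoEquivOfFin α hk).symm.toEquiv, fun a b => ?_⟩
  exact ((monoEquivOfFin α hk).symm.lt_iff_lt (x := a) (y := b)).symm

theorem Equiv.eq_of_lt_iff_lt {α β : Type*} [LinearOrder β] [WellFoundedLT β] (e e' : α ≃ β)
    (h : ∀ a b, e a < e b ↔ e' a < e' b) : e = e' := by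
  have hmono : StrictMono (e.symm.trans e') := fun x y hxy => by
    simpa using (h (e.symm x) (e.symm y)).1 (by simpa using hxy)
  have hid :=
    Subsingleton.elim (hmono.orderIsoOfSurjective _ (Equiv.surjective _)) (OrderIso.refl β)
  ext a
  simpa using (DFunLike.congr_fun hid (e a)).symm

namespace DS

variable {m n : ℕ}

theorem ext {F G : DS m n} (hf : F.f = G.f) (hlt : F.lt = G.lt) : F = G := by
  cases F; cases G; cases hf; cases hlt; rfl

def LexLT (F : DS m n) (a b : Fin (m+1)) : Prop :=
  F.f a < F.f b ∨ (F.f a = F.f b ∧ F.lt a b)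

instance (F : DS m n) : IsStrictTotalOrder (Fin (m+1)) F.LexLT where
  irrefl a := by
    rintro (h | ⟨-, h⟩)
    exacts [_root_.lt_irrefl _ h, F.lt_irrefl a h]
  trans a b c := by
    rintro (hab | ⟨hab, hab'⟩) (hbc | ⟨hbc, hbc'⟩)
    · exact Or.inl (hab.trans hbc)
    · exact Or.inl (hbc ▸ hab)
    · exact Or.inl (hab ▸ hbc)
    · exact Or.inr ⟨hab.trans hbc, F.lt_trans hab' hbc'⟩
  trichotomous a b hab hba := by
    by_contra hne
    rcases lt_trichotomy (F.f a) (F.f b) with h | h | h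
    · exact hab (Or.inl h)
    · rcases F.lt_total h hne with h' | h'
      exacts [hab (Or.inr ⟨h, h'⟩), hba (Or.inr ⟨h.symm, h'⟩)]
    · exact hba (Or.inl h)

theorem lt_iff_lexLT {F : DS m n} {a b : Fin (m+1)} :
    F.lt a b ↔ F.f a = F.f b ∧ F.LexLT a b := by
  refine ⟨fun h => ⟨F.lt_fiber h, Or.inr ⟨F.lt_fiber h, h⟩⟩, ?_⟩
  rintro ⟨he, h | ⟨-, h⟩⟩
  exacts [absurd he h.ne, h]

theorem ext_lexLT {F G : DS m n} (hf : F.f = G.f) (h : ∀ a b, F.LexLT a b ↔ G.LexLT a b) :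
    F = G := by
  refine ext hf ?_
  funext a b
  rw [lt_iff_lexLT, lt_iff_lexLT, h, hf]

theorem LexLT.f_le {F : DS m n} {a b : Fin (m+1)} (h : F.LexLT a b) : F.f a ≤ F.f b := by
  rcases h with h | ⟨h, -⟩
  exacts [h.le, h.le]

theorem lexLT_ofFun_iff {φ : Fin (m+1) → Fin (n+1)} (hφ : Monotone φ) {a b : Fin (m+1)} :
    (ofFun φ).LexLT a b ↔ a < b := by
  refine ⟨?_, fun h => ?_⟩
  · rintro (h | ⟨-, -, h⟩)
    exacts [hφ.reflect_lt h, h]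
  · rcases (hφ h.le).eq_or_lt with he | hlt
    exacts [Or.inr ⟨he, he, h⟩, Or.inl hlt]

theorem comp_ofPerm_lt_iff (F : DS m n) (σ : Equiv.Perm (Fin (m+1))) {a b : Fin (m+1)} :
    (F.comp (ofPerm σ)).lt a b ↔ F.lt (σ a) (σ b) := by
  refine ⟨?_, fun h => Or.inr ⟨fun he => ?_, h⟩⟩
  · rintro (⟨-, ⟨⟩⟩ | ⟨-, h⟩)
    exact h
  · rw [show σ a = σ b from he] at h
    exact F.lt_irrefl _ h

theorem lexLT_comp_ofPerm_iff (F : DS m n) (σ : Equiv.Perm (Fin (m+1))) {a b : Fin (m+1)} :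
    (F.comp (ofPerm σ)).LexLT a b ↔ F.LexLT (σ a) (σ b) := by
  unfold LexLT
  rw [comp_ofPerm_lt_iff]
  rfl

noncomputable def sortPerm (F : DS m n) : Equiv.Perm (Fin (m+1)) :=
  Classical.choose (exists_equiv_fin_lt_iff F.LexLT (Fintype.card_fin (m+1)))

theorem lexLT_iff_sortPerm_lt (F : DS m n) (a b : Fin (m+1)) :
    F.LexLT a b ↔ F.sortPerm a < F.sortPerm b :=
  Classical.choose_spec (exists_equiv_fin_lt_iff F.LexLT (Fintype.card_fin (m+1))) a b

theorem sortPerm_eq_of_lexLT_iff {F : DS m n} {σ : Equiv.Perm (Fin (m+1))}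
    (h : ∀ a b, F.LexLT a b ↔ σ a < σ b) : F.sortPerm = σ :=
  Equiv.eq_of_lt_iff_lt _ _ fun a b => (F.lexLT_iff_sortPerm_lt a b).symm.trans (h a b)

noncomputable def sortedFun (F : DS m n) : Fin (m+1) → Fin (n+1) :=
  F.f ∘ F.sortPerm.symm

theorem monotone_sortedFun (F : DS m n) : Monotone F.sortedFun := by
  intro a b hab
  rcases hab.eq_or_lt with rfl | hlt
  · exact le_rfl
  · exact LexLT.f_le ((F.lexLT_iff_sortPerm_lt _ _).2 (by simpa using hlt))

theorem ofFun_comp_ofPerm_lexLT_iff {φ : Fin (m+1) → Fin (n+1)} (hφ : Monotone φ)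
    (σ : Equiv.Perm (Fin (m+1))) (a b : Fin (m+1)) :
    ((ofFun φ).comp (ofPerm σ)).LexLT a b ↔ σ a < σ b := by
  rw [lexLT_comp_ofPerm_iff, lexLT_ofFun_iff hφ]

theorem ofFun_sortedFun_comp_ofPerm_sortPerm (F : DS m n) :
    (ofFun F.sortedFun).comp (ofPerm F.sortPerm) = F := by
  refine ext_lexLT ?_ fun a b => ?_
  · funext a
    simp [comp, ofFun, ofPerm, sortedFun]
  · rw [ofFun_comp_ofPerm_lexLT_iff F.monotone_sortedFun, lexLT_iff_sortPerm_lt]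

theorem sortPerm_ofFun_comp_ofPerm {φ : Fin (m+1) → Fin (n+1)} (hφ : Monotone φ)
    (σ : Equiv.Perm (Fin (m+1))) : ((ofFun φ).comp (ofPerm σ)).sortPerm = σ :=
  sortPerm_eq_of_lexLT_iff (ofFun_comp_ofPerm_lexLT_iff hφ σ)

theorem sortedFun_ofFun_comp_ofPerm {φ : Fin (m+1) → Fin (n+1)} (hφ : Monotone φ)
    (σ : Equiv.Perm (Fin (m+1))) : ((ofFun φ).comp (ofPerm σ)).sortedFun = φ := by
  rw [sortedFun, sortPerm_ofFun_comp_ofPerm hφ]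
  funext a
  exact congrArg φ (σ.apply_symm_apply a)

theorem sortPerm_comp_ofPerm (F : DS m n) (τ : Equiv.Perm (Fin (m+1))) :
    (F.comp (ofPerm τ)).sortPerm = F.sortPerm * τ :=
  sortPerm_eq_of_lexLT_iff fun a b => by
    rw [lexLT_comp_ofPerm_iff, lexLT_iff_sortPerm_lt, Equiv.Perm.mul_apply, Equiv.Perm.mul_apply]

theorem sortedFun_comp_ofPerm (F : DS m n) (τ : Equiv.Perm (Fin (m+1))) :
    (F.comp (ofPerm τ)).sortedFun = F.sortedFun := by
  rw [sortedFun, sortedFun, sortPerm_comp_ofPerm]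
  funext a
  exact congrArg F.f (τ.apply_symm_apply _)

noncomputable def epiEquiv (m n : ℕ) :
    {F : DS m n // Function.Surjective F.f} ≃
      (Equiv.Perm (Fin (m+1)) ×
        {φ : Fin (m+1) → Fin (n+1) // Monotone φ ∧ Function.Surjective φ}) where
  toFun F := (F.1.sortPerm,
    ⟨F.1.sortedFun, F.1.monotone_sortedFun, F.2.comp F.1.sortPerm.symm.surjective⟩)
  invFun p := ⟨(ofFun p.2.1).comp (ofPerm p.1), p.2.2.2.comp p.1.surjective⟩
  left_inv F := Subtype.ext F.1.ofFun_sortedFun_comp_ofPerm_sortPerm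
  right_inv p := Prod.ext (sortPerm_ofFun_comp_ofPerm p.2.2.1 p.1)
    (Subtype.ext (sortedFun_ofFun_comp_ofPerm p.2.2.1 p.1))

end DS

/-- Every epimorphism `[m] ↠ [n]` in `ΔS` factors uniquely as a
permutation of `[m]` followed by a surjective order-preserving map, giving a bijection
`Epi_ΔS([m],[n]) ≅ Σ_{m+1} × Epi_Δ([m],[n])`; moreover this bijection is equivariant
for the right `Σ_{m+1}`-action by precomposition, so that `Epi_ΔS([m],[n])` is a free
right `Σ_{m+1}`-set with orbit set `Epi_Δ([m],[n])`. -/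
theorem deltaS_epi_decomposition (m n : ℕ) :
    ∃ e : {F : DS m n // Function.Surjective F.f} ≃
        (Equiv.Perm (Fin (m+1)) ×
          {φ : Fin (m+1) → Fin (n+1) // Monotone φ ∧ Function.Surjective φ}),
      (∀ F : {F : DS m n // Function.Surjective F.f},
        F.1 = DS.comp (DS.ofFun (e F).2.1) (DS.ofPerm (e F).1)) ∧
      (∀ (F : {F : DS m n // Function.Surjective F.f}) (σ : Equiv.Perm (Fin (m+1)))
        (h : Function.Surjective (DS.comp F.1 (DS.ofPerm σ)).f),
        e ⟨DS.comp F.1 (DS.ofPerm σ), h⟩ = ((e F).1 * σ, (e F).2)) := by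
  refine ⟨DS.epiEquiv m n, fun F => F.1.ofFun_sortedFun_comp_ofPerm_sortPerm.symm,
    fun F σ _ => ?_⟩
  exact Prod.ext (F.1.sortPerm_comp_ofPerm σ) (Subtype.ext (F.1.sortedFun_comp_ofPerm σ))
end
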